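/- arXiv:1809.04396 — 6 statements merged into one kernel-verified Lean document; each statement's English description precedes it below -/
import Mathlib

section
/- Let G = (V, E, w) be a weighted hypergraph with positive degrees. The normalized Laplacian 𝓛_G is a monotone operator with respect to the inner product ⟨·,·⟩_{D⁻¹}: for all x₁, x₂ ∈ ℝ^V and all y₁ ∈ 𝓛_G(x₁), y₂ ∈ 𝓛_G(x₂), one has ⟨y₁ − y₂, x₁ − x₂⟩_{D⁻¹} ≥ 0. -/
open Finset
open scoped Classical

structure WHG (V : Type) [Fintype V] [DecidableEq V] where
  E : Type
  [fintypeE : Fintype E]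
  mem : E → Finset V
  mem_nonempty : ∀ e, (mem e).Nonempty
  w : E → ℝ
  w_pos : ∀ e, 0 < w e

namespace WHG

attribute [instance] WHG.fintypeE

variable {V : Type} [Fintype V] [DecidableEq V] (G : WHG V)

/-- Degree of a vertex. -/
noncomputable def deg (v : V) : ℝ := ∑ e : G.E, if v ∈ G.mem e then G.w e else 0

/-- Volume of a vertex set. -/
noncomputable def vol (S : Finset V) : ℝ := ∑ v ∈ S, G.deg v

/-- Euclidean dot product. -/
def dot (x y : V → ℝ) : ℝ := ∑ v, x v * y v

/-- Inner product weighted by `D⁻¹`. -/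
noncomputable def innerD (x y : V → ℝ) : ℝ := ∑ v, x v * y v / G.deg v

/-- Norm associated to `innerD`. -/
noncomputable def normD (x : V → ℝ) : ℝ := Real.sqrt (G.innerD x x)

/-- `D⁻¹ x`. -/
noncomputable def Dinv (x : V → ℝ) : V → ℝ := fun v => x v / G.deg v

/-- Base polytope `B_e`. -/
def base (e : G.E) : Set (V → ℝ) :=
  convexHull ℝ {b : V → ℝ | ∃ u ∈ G.mem e, ∃ v ∈ G.mem e, b = Pi.single u 1 - Pi.single v 1}

/-- Multi-valued hypergraph Laplacian `L_G`. -/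
def Lap (x : V → ℝ) : Set (V → ℝ) :=
  {y | ∃ b : G.E → V → ℝ,
    (∀ e, b e ∈ G.base e ∧ ∀ b' ∈ G.base e, dot b' x ≤ dot (b e) x) ∧
    y = ∑ e : G.E, (G.w e * dot (b e) x) • b e}

/-- Normalized Laplacian `𝓛_G`. -/
noncomputable def nLap (x : V → ℝ) : Set (V → ℝ) := G.Lap (G.Dinv x)

/-- Total weight of hyperedges crossing `S`. -/
noncomputable def cut (S : Finset V) : ℝ :=
  ∑ e : G.E, if (G.mem e ∩ S).Nonempty ∧ (G.mem e \ S).Nonempty then G.w e else 0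

/-- Conductance of a vertex set. -/
noncomputable def cond (S : Finset V) : ℝ := G.cut S / min (G.vol S) (G.vol Sᶜ)

/-- Conductance of the hypergraph. -/
noncomputable def condG : ℝ :=
  sInf {c | ∃ S : Finset V, S.Nonempty ∧ S ≠ Finset.univ ∧ c = G.cond S}

/-- Connectivity of a hypergraph. -/
def Connected : Prop :=
  ∀ S : Finset V, S.Nonempty → S ≠ Finset.univ →
    ∃ e : G.E, (G.mem e ∩ S).Nonempty ∧ (G.mem e \ S).Nonempty

/-- The stationary vector `π`. -/
noncomputable def piVec : V → ℝ := fun v => G.deg v / G.vol Finset.univ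

/-- Solution of the heat equation `(HE; s)`. -/
def IsHeatSol (s : V → ℝ) (ρ : ℝ → V → ℝ) : Prop :=
  (∃ K : NNReal, LipschitzOnWith K ρ (Set.Ici 0)) ∧ ρ 0 = s ∧
  (∀ᵐ t : ℝ ∂MeasureTheory.volume, 0 ≤ t → ∃ y ∈ G.nLap (ρ t), HasDerivAt ρ (-y) t)

/-- Sweep sets of a vector. -/
def sweep (x : V → ℝ) : Set (Finset V) :=
  {S | ∃ τ : ℝ, S = Finset.univ.filter (fun v => τ ≤ x v) ∨
                S = Finset.univ.filter (fun v => x v ≤ τ)}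

/-- `κ_{T,t}`: the least conductance of nontrivial sweep sets of `ρ_ξ`, `ξ ∈ [T,t]`. -/
noncomputable def kappa (ρ : ℝ → V → ℝ) (T t : ℝ) : ℝ :=
  sInf {c | ∃ ξ ∈ Set.Icc T t, ∃ S ∈ sweep (ρ ξ),
    S.Nonempty ∧ S ≠ Finset.univ ∧ c = G.cond S}

/-- The family `𝒢(G, x)` of collapsed weighted graphs. -/
def GraphFamily (x : V → ℝ) (A : Matrix V V ℝ) : Prop :=
  A.IsSymm ∧ (∀ u v, 0 ≤ A u v) ∧ (∀ v, ∑ u, A v u = G.deg v) ∧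
  ∃ w' : G.E → V → V → ℝ,
    (∀ e u v, 0 ≤ w' e u v) ∧
    (∀ e u v, w' e u v ≠ 0 →
      (u ∈ G.mem e ∧ ∀ u' ∈ G.mem e, x u' ≤ x u) ∧
      (v ∈ G.mem e ∧ ∀ v' ∈ G.mem e, x v ≤ x v')) ∧
    (∀ e, ∑ u : V, ∑ v : V, w' e u v = G.w e) ∧
    (∀ u v, u ≠ v → A u v = ∑ e : G.E, (w' e u v + w' e v u))


/- Since `⟨y, x⟩_{D⁻¹} = ⟨y, D⁻¹x⟩`, it suffices that `L_G` is monotone for the Euclidean pairing.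
Each hyperedge contributes `w e • (⟨b, z⟩ • b)` with `b` maximising `⟨·, z⟩` over `B_e ∋ 0`;
this is a subgradient of `½ (max_{b ∈ B_e} ⟨b, z⟩)²`, so each contribution is monotone. Concretely,
with `a = ⟨b₁, z₁⟩ ≥ 0`, `c = ⟨b₂, z₂⟩ ≥ 0`, maximality gives `⟨b₁, z₂⟩ ≤ c` and `⟨b₂, z₁⟩ ≤ a`,
so the pairing of the contributions with `z₁ - z₂` is at least `(a - c)² ≥ 0`. -/

open Matrix

omit [DecidableEq V] in
theorem dot_eq_dotProduct (x y : V → ℝ) : dot x y = x ⬝ᵥ y := rfl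

theorem innerD_eq_dot_Dinv (x y : V → ℝ) : G.innerD x y = dot x (G.Dinv y) := by
  simp only [innerD, dot, Dinv, mul_div_assoc]

theorem Dinv_sub (x y : V → ℝ) : G.Dinv (x - y) = G.Dinv x - G.Dinv y := by
  funext v
  simp only [Dinv, Pi.sub_apply, sub_div]

theorem zero_mem_base (e : G.E) : (0 : V → ℝ) ∈ G.base e := by
  obtain ⟨u, hu⟩ := G.mem_nonempty e
  exact subset_convexHull ℝ _ ⟨u, hu, u, hu, by simp⟩

omit [DecidableEq V] in
theorem smul_maximizer_sub_dotProduct_nonneg {B : Set (V → ℝ)} (h0 : 0 ∈ B)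
    {b₁ b₂ z₁ z₂ : V → ℝ} (hb₁ : b₁ ∈ B) (hb₂ : b₂ ∈ B)
    (hmax₁ : ∀ b ∈ B, b ⬝ᵥ z₁ ≤ b₁ ⬝ᵥ z₁) (hmax₂ : ∀ b ∈ B, b ⬝ᵥ z₂ ≤ b₂ ⬝ᵥ z₂) :
    0 ≤ ((b₁ ⬝ᵥ z₁) • b₁ - (b₂ ⬝ᵥ z₂) • b₂) ⬝ᵥ (z₁ - z₂) := by
  have ha : 0 ≤ b₁ ⬝ᵥ z₁ := by simpa using hmax₁ 0 h0
  have hc : 0 ≤ b₂ ⬝ᵥ z₂ := by simpa using hmax₂ 0 h0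
  have h₁₂ := hmax₂ b₁ hb₁
  have h₂₁ := hmax₁ b₂ hb₂
  simp only [sub_dotProduct, dotProduct_sub, smul_dotProduct, smul_eq_mul]
  nlinarith [sq_nonneg (b₁ ⬝ᵥ z₁ - b₂ ⬝ᵥ z₂), mul_nonneg ha (sub_nonneg.2 h₁₂),
    mul_nonneg hc (sub_nonneg.2 h₂₁)]

theorem Lap_monotone {z₁ z₂ y₁ y₂ : V → ℝ} (h₁ : y₁ ∈ G.Lap z₁) (h₂ : y₂ ∈ G.Lap z₂) :
    0 ≤ dot (y₁ - y₂) (z₁ - z₂) := by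
  obtain ⟨b₁, hb₁, rfl⟩ := h₁
  obtain ⟨b₂, hb₂, rfl⟩ := h₂
  have hsplit : dot (∑ e, (G.w e * dot (b₁ e) z₁) • b₁ e - ∑ e, (G.w e * dot (b₂ e) z₂) • b₂ e)
      (z₁ - z₂) = ∑ e, G.w e *
        ((dot (b₁ e) z₁ • b₁ e - dot (b₂ e) z₂ • b₂ e) ⬝ᵥ (z₁ - z₂)) := by
    simp only [dot_eq_dotProduct, ← Finset.sum_sub_distrib, sum_dotProduct, mul_smul,
      ← smul_sub, smul_dotProduct, smul_eq_mul]
  rw [hsplit]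
  exact Finset.sum_nonneg fun e _ => mul_nonneg (G.w_pos e).le <|
    smul_maximizer_sub_dotProduct_nonneg (G.zero_mem_base e) (hb₁ e).1 (hb₂ e).1
      (hb₁ e).2 (hb₂ e).2

theorem nLap_monotone_general {V : Type} [Fintype V] [DecidableEq V] (G : WHG V)
    (x₁ x₂ y₁ y₂ : V → ℝ)
    (h₁ : y₁ ∈ G.nLap x₁) (h₂ : y₂ ∈ G.nLap x₂) :
    0 ≤ G.innerD (y₁ - y₂) (x₁ - x₂) := by
  rw [innerD_eq_dot_Dinv, Dinv_sub]
  exact G.Lap_monotone h₁ h₂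

/-- the normalized Laplacian of a weighted hypergraph is a monotone
operator with respect to `⟨·,·⟩_{D⁻¹}`. -/
theorem nLap_monotone {V : Type} [Fintype V] [DecidableEq V] (G : WHG V)
    (hd : ∀ v, 0 < G.deg v) (x₁ x₂ y₁ y₂ : V → ℝ)
    (h₁ : y₁ ∈ G.nLap x₁) (h₂ : y₂ ∈ G.nLap x₂) :
    0 ≤ G.innerD (y₁ - y₂) (x₁ - x₂) :=
  nLap_monotone_general G x₁ x₂ y₁ y₂ h₁ h₂

end WHG
end

section
/- Let G = (V, E, w) be a weighted hypergraph with positive degrees. The range of I + 𝓛_G is all of ℝ^V: for every b ∈ ℝ^V there exist x ∈ ℝ^V and y ∈ 𝓛_G(x) such that x + y = b. (Together with monotonicity, this means the monotone operator 𝓛_G is maximal.) -/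
open Finset
open scoped Classical

/-!
Write `z = D⁻¹x` and let `σ_e(z) = max_{a ∈ B_e} aᵀz` be the support function of `B_e`. Then
`x + y = b` with `y ∈ L_G(z)` is the optimality condition of the coercive energy
`E(z) = ½ zᵀDz − bᵀz + ½ ∑_e w(e) σ_e(z)²`, which therefore has a minimiser `z`. Since `σ_e` is
a maximum of finitely many linear forms, `E(z + th) ≤ E(z) + t rᵀh + O(t²)` as `t ↓ 0`, where
`r = Dz − b + ∑_e w(e) σ_e(z) c_e` and `c_e` is a generator of `B_e` maximising `c_eᵀh` among
those maximising `c_eᵀz`; minimality gives `rᵀh ≥ 0`. So the compact convex set of residuals `r`,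
with `c_e` ranging over the faces of the `B_e` exposed by `z`, meets every half-space
`{r | rᵀh ≥ 0}`, and Hahn–Banach separation puts `0` in it.
-/

open Filter Topology

theorem isLinearMap_dotProduct_left {ι : Type*} [Fintype ι] (z : ι → ℝ) :
    IsLinearMap ℝ (· ⬝ᵥ z) :=
  ⟨fun a a' => add_dotProduct a a' z, fun t a => smul_dotProduct t a z⟩

theorem eventually_forall_add_mul_le {ι : Type*} {s : Finset ι} {f g : ι → ℝ} {M m : ℝ}
    (hf : ∀ i ∈ s, f i ≤ M) (hg : ∀ i ∈ s, f i = M → g i ≤ m) :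
    ∀ᶠ t in 𝓝[>] (0 : ℝ), ∀ i ∈ s, f i + t * g i ≤ M + t * m := by
  rw [eventually_all_finset]
  intro i hi
  rcases (hf i hi).eq_or_lt with hfi | hfi
  · filter_upwards [self_mem_nhdsWithin] with t (ht : 0 < t)
    nlinarith [hg i hi hfi]
  · have hcont : Continuous fun t : ℝ => f i + t * g i - (M + t * m) := by fun_prop
    have hneg := (hcont.tendsto 0).eventually_lt_const
      (by linarith : f i + 0 * g i - (M + 0 * m) < 0)
    filter_upwards [nhdsWithin_le_nhds hneg] with t ht
    linarith

theorem nonneg_of_eventually_nonneg_mul_add_sq_mul {A B : ℝ}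
    (h : ∀ᶠ t in 𝓝[>] (0 : ℝ), 0 ≤ t * A + t ^ 2 * B) : 0 ≤ A := by
  have hlin : ∀ᶠ t in 𝓝[>] (0 : ℝ), 0 ≤ A + t * B := by
    filter_upwards [h, self_mem_nhdsWithin] with t ht (htpos : 0 < t)
    exact nonneg_of_mul_nonneg_right (by linarith) htpos
  have hlim : Tendsto (fun t : ℝ => A + t * B) (𝓝[>] 0) (𝓝 A) :=
    ((continuous_const.add (continuous_id.mul continuous_const)).tendsto' 0 A (by simp)).mono_left
      nhdsWithin_le_nhds
  exact ge_of_tendsto hlim hlin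

theorem mem_of_forall_exists_dotProduct_le {ι : Type*} [Fintype ι] {C : Set (ι → ℝ)}
    (hconv : Convex ℝ C) (hclosed : IsClosed C) {x : ι → ℝ}
    (h : ∀ y : ι → ℝ, ∃ c ∈ C, x ⬝ᵥ y ≤ c ⬝ᵥ y) : x ∈ C := by
  by_contra hx
  obtain ⟨f, u, hfC, hfx⟩ := geometric_hahn_banach_closed_point hconv hclosed hx
  have hf : ∀ a, f a = a ⬝ᵥ fun i => f fun j => if i = j then 1 else 0 := fun a => by
    simpa [dotProduct] using (f : (ι → ℝ) →ₗ[ℝ] ℝ).pi_apply_eq_sum_univ a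
  obtain ⟨c, hc, hle⟩ := h fun i => f fun j => if i = j then 1 else 0
  rw [← hf, ← hf] at hle
  linarith [hfC c hc]

theorem exists_add_sum_smul_eq_zero {ι κ : Type*} [Fintype ι] [Fintype κ] {K : κ → Set (ι → ℝ)}
    (hcompact : ∀ k, IsCompact (K k)) (hconv : ∀ k, Convex ℝ (K k)) (r : ι → ℝ) (a : κ → ℝ)
    (h : ∀ y, ∃ c : κ → ι → ℝ, (∀ k, c k ∈ K k) ∧ 0 ≤ (r + ∑ k, a k • c k) ⬝ᵥ y) :
    ∃ c : κ → ι → ℝ, (∀ k, c k ∈ K k) ∧ r + ∑ k, a k • c k = 0 := by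
  set S : (κ → ι → ℝ) → ι → ℝ := fun c => ∑ k, a k • c k with hS
  have hSlin : IsLinearMap ℝ S :=
    ⟨fun c d => by simp [hS, smul_add, sum_add_distrib],
      fun t c => by simp [hS, smul_sum, smul_comm t]⟩
  have hScont : Continuous S := by fun_prop
  have hmem : -r ∈ S '' Set.univ.pi K := by
    refine mem_of_forall_exists_dotProduct_le ((convex_pi fun k _ => hconv k).is_linear_image hSlin)
      ((isCompact_univ_pi hcompact).image hScont).isClosed fun y => ?_
    obtain ⟨c, hc, hy⟩ := h y
    refine ⟨S c, ⟨c, fun k _ => hc k, rfl⟩, ?_⟩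
    rw [add_dotProduct] at hy
    rw [neg_dotProduct]
    linarith
  obtain ⟨c, hc, hSc⟩ := hmem
  exact ⟨c, fun k => hc k trivial, show r + S c = 0 by rw [hSc, add_neg_cancel]⟩

namespace WHG

variable {V : Type} [Fintype V] [DecidableEq V] (G : WHG V)

noncomputable def gens (e : G.E) : Finset (V → ℝ) :=
  (G.mem e ×ˢ G.mem e).image fun p => Pi.single p.1 1 - Pi.single p.2 1

theorem base_eq_convexHull_gens (e : G.E) : G.base e = convexHull ℝ ↑(G.gens e) := by
  rw [base, gens, coe_image]
  congr 1
  ext a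
  simp [and_assoc, eq_comm]

theorem zero_mem_gens (e : G.E) : (0 : V → ℝ) ∈ G.gens e := by
  obtain ⟨u, hu⟩ := G.mem_nonempty e
  exact mem_image.2 ⟨(u, u), mem_product.2 ⟨hu, hu⟩, sub_self _⟩

theorem gens_nonempty (e : G.E) : (G.gens e).Nonempty := ⟨0, G.zero_mem_gens e⟩

noncomputable def baseSupport (e : G.E) (z : V → ℝ) : ℝ :=
  (G.gens e).sup' (G.gens_nonempty e) (· ⬝ᵥ z)

/-- Generators of the face of `B_e` exposed by `z`. -/
noncomputable def baseFace (e : G.E) (z : V → ℝ) : Finset (V → ℝ) :=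
  (G.gens e).filter fun a => a ⬝ᵥ z = G.baseSupport e z

variable {G}

theorem dotProduct_le_baseSupport {e : G.E} {a : V → ℝ} (ha : a ∈ G.gens e) (z : V → ℝ) :
    a ⬝ᵥ z ≤ G.baseSupport e z :=
  le_sup' (· ⬝ᵥ z) ha

theorem baseSupport_nonneg (e : G.E) (z : V → ℝ) : 0 ≤ G.baseSupport e z := by
  simpa using dotProduct_le_baseSupport (G.zero_mem_gens e) z

theorem continuous_baseSupport (e : G.E) : Continuous (G.baseSupport e) :=
  Continuous.finset_sup'_apply _ fun _ _ => continuous_const.dotProduct continuous_id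

theorem baseFace_nonempty (e : G.E) (z : V → ℝ) : (G.baseFace e z).Nonempty := by
  obtain ⟨a, ha, hmax⟩ := exists_mem_eq_sup' (G.gens_nonempty e) (· ⬝ᵥ z)
  exact ⟨a, mem_filter.2 ⟨ha, hmax.symm⟩⟩

theorem dotProduct_le_baseSupport_of_mem_base {e : G.E} {a : V → ℝ} (ha : a ∈ G.base e)
    (z : V → ℝ) : a ⬝ᵥ z ≤ G.baseSupport e z := by
  rw [base_eq_convexHull_gens] at ha
  refine convexHull_min (fun a' ha' => dotProduct_le_baseSupport ha' z) ?_ ha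
  exact convex_halfSpace_le (isLinearMap_dotProduct_left z) _

theorem convexHull_baseFace_subset_base (e : G.E) (z : V → ℝ) :
    convexHull ℝ ↑(G.baseFace e z) ⊆ G.base e := by
  rw [base_eq_convexHull_gens]
  exact convexHull_mono (coe_subset.2 (filter_subset _ _))

theorem dotProduct_eq_baseSupport_of_mem_convexHull_baseFace {e : G.E} {z c : V → ℝ}
    (hc : c ∈ convexHull ℝ ↑(G.baseFace e z)) : c ⬝ᵥ z = G.baseSupport e z := by
  refine convexHull_min (t := {a | a ⬝ᵥ z = G.baseSupport e z}) (fun a ha => (mem_filter.1 ha).2)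
    (convex_hyperplane (isLinearMap_dotProduct_left z) _) hc

theorem eventually_baseSupport_add_smul_le {e : G.E} {z h c : V → ℝ}
    (hmax : ∀ a ∈ G.baseFace e z, a ⬝ᵥ h ≤ c ⬝ᵥ h) :
    ∀ᶠ t in 𝓝[>] (0 : ℝ), G.baseSupport e (z + t • h) ≤ G.baseSupport e z + t * (c ⬝ᵥ h) := by
  filter_upwards [eventually_forall_add_mul_le (s := G.gens e) (f := (· ⬝ᵥ z)) (g := (· ⬝ᵥ h))
    (fun a ha => dotProduct_le_baseSupport ha z)
    (fun a ha hfa => hmax a (mem_filter.2 ⟨ha, hfa⟩))] with t ht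
  exact sup'_le _ _ fun a ha => by simpa [dotProduct_add, dotProduct_smul] using ht a ha

variable (G)

noncomputable def energy (b z : V → ℝ) : ℝ :=
  ∑ v, (G.deg v / 2 * z v ^ 2 - b v * z v) + ∑ e, G.w e / 2 * G.baseSupport e z ^ 2

theorem continuous_energy (b : V → ℝ) : Continuous (G.energy b) :=
  (continuous_finsetSum _ fun v _ => by fun_prop).add
    (continuous_finsetSum _ fun e _ => continuous_const.mul ((G.continuous_baseSupport e).pow 2))

theorem tendsto_energy_cocompact (hd : ∀ v, 0 < G.deg v) (b : V → ℝ) :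
    Tendsto (G.energy b) (cocompact (V → ℝ)) atTop := by
  set C := ∑ u, b u ^ 2 / G.deg u
  have hlow : ∀ z v, G.deg v / 4 * z v ^ 2 - C ≤ G.energy b z := by
    intro z v
    have hterm : ∀ u, G.deg u / 4 * z u ^ 2 - b u ^ 2 / G.deg u ≤
        G.deg u / 2 * z u ^ 2 - b u * z u := by
      intro u
      have hdu := hd u
      have hsq : 0 ≤ (G.deg u * z u / 2 - b u) ^ 2 / G.deg u := by positivity
      have hid : (G.deg u * z u / 2 - b u) ^ 2 / G.deg u =
          G.deg u / 2 * z u ^ 2 - b u * z u - (G.deg u / 4 * z u ^ 2 - b u ^ 2 / G.deg u) := by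
        field_simp
        ring
      linarith
    have hsig : 0 ≤ ∑ e, G.w e / 2 * G.baseSupport e z ^ 2 :=
      sum_nonneg fun e _ => mul_nonneg (half_pos (G.w_pos e)).le (sq_nonneg _)
    calc G.deg v / 4 * z v ^ 2 - C ≤ ∑ u, (G.deg u / 4 * z u ^ 2 - b u ^ 2 / G.deg u) := by
          rw [sum_sub_distrib]
          gcongr
          exact single_le_sum (f := fun u => G.deg u / 4 * z u ^ 2)
            (fun u _ => by have := hd u; positivity) (mem_univ v)
      _ ≤ ∑ u, (G.deg u / 2 * z u ^ 2 - b u * z u) := sum_le_sum fun u _ => hterm u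
      _ ≤ G.energy b z := le_add_of_nonneg_right hsig
  rw [← coprodᵢ_cocompact, Filter.coprodᵢ, tendsto_iSup]
  intro v
  have hsq : Tendsto (fun s : ℝ => s ^ 2) (cocompact ℝ) atTop := by
    convert (tendsto_pow_atTop two_ne_zero).comp (tendsto_norm_cocompact_atTop (E := ℝ)) using 1
    ext s
    simp
  have hquad : Tendsto (fun s : ℝ => G.deg v / 4 * s ^ 2 - C) (cocompact ℝ) atTop := by
    simpa [sub_eq_add_neg] using
      tendsto_atTop_add_const_right _ (-C) (hsq.const_mul_atTop (by linarith [hd v]))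
  exact tendsto_atTop_mono (hlow · v) (hquad.comp tendsto_comap)

theorem exists_forall_energy_le (hd : ∀ v, 0 < G.deg v) (b : V → ℝ) :
    ∃ z, ∀ z', G.energy b z ≤ G.energy b z' :=
  (G.continuous_energy b).exists_forall_le (G.tendsto_energy_cocompact hd b)

noncomputable def residual (b z : V → ℝ) (c : G.E → V → ℝ) : V → ℝ :=
  (fun v => G.deg v * z v - b v) + ∑ e, (G.w e * G.baseSupport e z) • c e

theorem eventually_energy_add_smul_le {b z h : V → ℝ} {c : G.E → V → ℝ}
    (hmax : ∀ e, ∀ a ∈ G.baseFace e z, a ⬝ᵥ h ≤ c e ⬝ᵥ h) :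
    ∃ B : ℝ, ∀ᶠ t in 𝓝[>] (0 : ℝ),
      G.energy b (z + t • h) ≤ G.energy b z + t * (G.residual b z c ⬝ᵥ h) + t ^ 2 * B := by
  refine ⟨∑ v, G.deg v / 2 * h v ^ 2 + ∑ e, G.w e / 2 * (c e ⬝ᵥ h) ^ 2, ?_⟩
  filter_upwards [eventually_all.2 fun e => eventually_baseSupport_add_smul_le (hmax e)] with t ht
  -- `σ_e ≥ 0` since `0 ∈ B_e`, so the first-order bound on `σ_e` survives squaring
  have hedge_le : ∑ e, G.w e / 2 * G.baseSupport e (z + t • h) ^ 2 ≤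
      ∑ e, G.w e / 2 * (G.baseSupport e z + t * (c e ⬝ᵥ h)) ^ 2 :=
    sum_le_sum fun e _ => mul_le_mul_of_nonneg_left
      (pow_le_pow_left₀ (baseSupport_nonneg e _) (ht e) 2) (half_pos (G.w_pos e)).le
  have hvertex : ∑ v, (G.deg v / 2 * (z + t • h) v ^ 2 - b v * (z + t • h) v) =
      ∑ v, (G.deg v / 2 * z v ^ 2 - b v * z v) + t * ∑ v, (G.deg v * z v - b v) * h v
        + t ^ 2 * ∑ v, G.deg v / 2 * h v ^ 2 := by
    simp only [Pi.add_apply, Pi.smul_apply, smul_eq_mul, mul_sum, ← sum_add_distrib]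
    exact sum_congr rfl fun v _ => by ring
  have hedge : ∑ e, G.w e / 2 * (G.baseSupport e z + t * (c e ⬝ᵥ h)) ^ 2 =
      ∑ e, G.w e / 2 * G.baseSupport e z ^ 2 + t * ∑ e, G.w e * G.baseSupport e z * (c e ⬝ᵥ h)
        + t ^ 2 * ∑ e, G.w e / 2 * (c e ⬝ᵥ h) ^ 2 := by
    simp only [mul_sum, ← sum_add_distrib]
    exact sum_congr rfl fun e _ => by ring
  have hresidual : G.residual b z c ⬝ᵥ h =
      ∑ v, (G.deg v * z v - b v) * h v + ∑ e, G.w e * G.baseSupport e z * (c e ⬝ᵥ h) := by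
    simp only [residual, add_dotProduct, sum_dotProduct, smul_dotProduct, smul_eq_mul]
    rfl
  rw [energy, energy, hvertex, hresidual]
  linarith

theorem exists_baseFace_residual_dotProduct_nonneg {b z : V → ℝ}
    (hz : ∀ z', G.energy b z ≤ G.energy b z') (h : V → ℝ) :
    ∃ c : G.E → V → ℝ, (∀ e, c e ∈ G.baseFace e z) ∧ 0 ≤ G.residual b z c ⬝ᵥ h := by
  choose c hc hmax using fun e => exists_max_image (G.baseFace e z) (· ⬝ᵥ h) (baseFace_nonempty e z)
  obtain ⟨B, hB⟩ := G.eventually_energy_add_smul_le (b := b) hmax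
  refine ⟨c, hc, nonneg_of_eventually_nonneg_mul_add_sq_mul (B := B) ?_⟩
  filter_upwards [hB] with t ht
  linarith [hz (z + t • h)]

theorem exists_convexHull_baseFace_residual_eq_zero {b z : V → ℝ}
    (hz : ∀ z', G.energy b z ≤ G.energy b z') :
    ∃ c : G.E → V → ℝ, (∀ e, c e ∈ convexHull ℝ ↑(G.baseFace e z)) ∧ G.residual b z c = 0 :=
  exists_add_sum_smul_eq_zero
    (fun e => (G.baseFace e z).finite_toSet.isCompact_convexHull (𝕜 := ℝ))
    (fun _ => convex_convexHull ℝ _) _ _ fun h =>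
      let ⟨c, hc, hres⟩ := G.exists_baseFace_residual_dotProduct_nonneg hz h
      ⟨c, fun e => subset_convexHull ℝ _ (hc e), hres⟩

/-- the range of `I + 𝓛_G` is all of `ℝ^V` (maximality of the
monotone operator `𝓛_G`). -/
theorem range_id_add_nLap {V : Type} [Fintype V] [DecidableEq V] (G : WHG V)
    (hd : ∀ v, 0 < G.deg v) (b : V → ℝ) :
    ∃ x : V → ℝ, ∃ y ∈ G.nLap x, x + y = b := by
  obtain ⟨z, hz⟩ := G.exists_forall_energy_le hd b
  obtain ⟨c, hc, hzero⟩ := G.exists_convexHull_baseFace_residual_eq_zero hz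
  have hDinv : G.Dinv (fun v => G.deg v * z v) = z :=
    funext fun v => mul_div_cancel_left₀ _ (hd v).ne'
  have hdot : ∀ e, dot (c e) z = G.baseSupport e z :=
    fun e => dotProduct_eq_baseSupport_of_mem_convexHull_baseFace (hc e)
  refine ⟨fun v => G.deg v * z v, _,
    ⟨c, fun e => ⟨convexHull_baseFace_subset_base e z (hc e), fun a ha => ?_⟩, rfl⟩, ?_⟩
  · rw [hDinv, hdot]
    exact dotProduct_le_baseSupport_of_mem_base ha z
  · simp only [hDinv, hdot]
    funext v
    have hv := congrFun hzero v
    simp only [residual, Pi.add_apply, Pi.zero_apply] at hv ⊢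
    linarith

end WHG
end

section
/- Let G = (V, E, w) be a weighted hypergraph with positive degrees and let x ∈ ℝ^V. For every a ∈ ℝ such that the sweep set S^a := {v ∈ V : x(v) ≥ a} satisfies ∅ ⊊ S^a ⊊ V, one has φ_G(S^a) = φ_{G̃}(S̃^a), where G̃ is the contracted weighted graph associated with x and S̃^a = {b ∈ W : b ≥ a}. -/
/-! A hyperedge `e` crosses the superlevel set `{v | a ≤ x v}` exactly when
`min_e x < a ≤ max_e x`, that is, exactly when the contracted edge `{max_e x, min_e x}` it is
sent to joins a value `≥ a` to a value `< a`; so the two cuts are the same sum of weights.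
The volumes agree because `V` is the disjoint union of the fibres of `x`. -/

open Finset
open scoped Classical

theorem Finset.sum_image_filter_sum_fiber {ι α M : Type*} [Fintype ι] [DecidableEq α]
    [AddCommMonoid M] (x : ι → α) (p : α → Prop) [DecidablePred p] (f : ι → M) :
    ∑ b ∈ (univ.image x).filter p, ∑ v ∈ univ.filter (fun v => x v = b), f v =
      ∑ v ∈ univ.filter (fun v => p (x v)), f v := by
  rw [← sum_fiberwise_of_maps_to (g := x) (t := (univ.image x).filter p)
    (fun v hv => mem_filter.2 ⟨mem_image_of_mem x (mem_univ v), (mem_filter.1 hv).2⟩)]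
  refine sum_congr rfl fun b hb => sum_congr ?_ fun _ _ => rfl
  rw [filter_filter]
  exact filter_congr fun v _ => ⟨fun h => ⟨h ▸ (mem_filter.1 hb).2, h⟩, And.right⟩

theorem Set.pair_eq_pair_iff_of_le_of_lt {α : Type*} [LinearOrder α] {B C b c : α}
    (hCB : C ≤ B) (hcb : c < b) : ({B, C} : Set α) = {b, c} ↔ b = B ∧ c = C := by
  refine ⟨fun h => ?_, fun ⟨hb, hc⟩ => hb ▸ hc ▸ rfl⟩
  rcases Set.pair_eq_pair_iff.1 h with ⟨hB, hC⟩ | ⟨hB, hC⟩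
  · exact ⟨hB.symm, hC.symm⟩
  · exact absurd (hC ▸ hB ▸ hCB) (not_le.2 hcb)

theorem Finset.sum_sum_ite_pair_eq_pair {α M : Type*} [LinearOrder α] [AddCommMonoid M]
    (W : Finset α) (a : α) {B C : α} (hB : B ∈ W) (hC : C ∈ W) (hCB : C ≤ B) (r : M) :
    ∑ b ∈ W.filter (fun b => a ≤ b), ∑ c ∈ W.filter (fun c => ¬ a ≤ c),
        (if ({B, C} : Set α) = {b, c} then r else 0) =
      if a ≤ B ∧ C < a then r else 0 := by
  have hpair : ∀ b ∈ W.filter (fun b => a ≤ b), ∀ c ∈ W.filter (fun c => ¬ a ≤ c),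
      ({B, C} : Set α) = {b, c} ↔ b = B ∧ c = C := fun b hb c hc =>
    Set.pair_eq_pair_iff_of_le_of_lt hCB
      ((not_le.1 (mem_filter.1 hc).2).trans_le (mem_filter.1 hb).2)
  rw [sum_congr rfl fun b hb => sum_congr rfl fun c hc => if_congr (hpair b hb c hc) rfl rfl]
  simp [ite_and, sum_ite_irrel, sum_ite_eq', hB, hC]

namespace WHG

variable {V : Type} [Fintype V] [DecidableEq V] (G : WHG V)

theorem cut_filter_le (x : V → ℝ) (a : ℝ) :
    G.cut (univ.filter (fun v => a ≤ x v)) =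
      ∑ e : G.E, if a ≤ (G.mem e).sup' (G.mem_nonempty e) x ∧
        (G.mem e).inf' (G.mem_nonempty e) x < a then G.w e else 0 := by
  refine sum_congr rfl fun e _ => if_congr ?_ rfl rfl
  simp only [le_sup'_iff, inf'_lt_iff, Finset.Nonempty, mem_inter, mem_sdiff, mem_filter,
    mem_univ, true_and, not_le]

theorem sweep_cond_eq_contracted_general {V : Type} [Fintype V] [DecidableEq V] (G : WHG V)
    (x : V → ℝ) (a : ℝ) :
    G.cond (Finset.univ.filter (fun v => a ≤ x v)) =
      (∑ b ∈ (Finset.image x Finset.univ).filter (fun b => a ≤ b),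
        ∑ c ∈ (Finset.image x Finset.univ).filter (fun c => ¬ a ≤ c),
          ∑ e : G.E,
            if ({(G.mem e).sup' (G.mem_nonempty e) x,
                 (G.mem e).inf' (G.mem_nonempty e) x} : Set ℝ) = {b, c}
            then G.w e else 0)
      / min
          (∑ b ∈ (Finset.image x Finset.univ).filter (fun b => a ≤ b),
            ∑ v ∈ Finset.univ.filter (fun v => x v = b), G.deg v)
          (∑ c ∈ (Finset.image x Finset.univ).filter (fun c => ¬ a ≤ c),
            ∑ v ∈ Finset.univ.filter (fun v => x v = c), G.deg v) := by
  rw [cond, compl_filter, vol, vol, sum_image_filter_sum_fiber,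
    sum_image_filter_sum_fiber, cut_filter_le, sum_congr rfl fun b _ => sum_comm, sum_comm]
  congr 1
  refine sum_congr rfl fun e _ => (sum_sum_ite_pair_eq_pair _ a ?_ ?_ ?_ (G.w e)).symm
  · obtain ⟨y, hy, h⟩ := exists_mem_eq_sup' (G.mem_nonempty e) x
    exact h ▸ mem_image_of_mem x (mem_univ y)
  · obtain ⟨y, hy, h⟩ := exists_mem_eq_inf' (G.mem_nonempty e) x
    exact h ▸ mem_image_of_mem x (mem_univ y)
  · obtain ⟨y, hy⟩ := G.mem_nonempty e
    exact (inf'_le x hy).trans (le_sup' x hy)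

/-- Lemma 4.6: the conductance of a sweep set of `x` in the hypergraph
`G` equals the conductance of the corresponding sweep set in the contracted weighted
graph `G̃` on the value set `W = x(V)`. -/
theorem sweep_cond_eq_contracted {V : Type} [Fintype V] [DecidableEq V] (G : WHG V)
    (hd : ∀ v, 0 < G.deg v) (x : V → ℝ) (a : ℝ)
    (hS1 : (Finset.univ.filter (fun v => a ≤ x v)).Nonempty)
    (hS2 : Finset.univ.filter (fun v => a ≤ x v) ≠ Finset.univ) :
    G.cond (Finset.univ.filter (fun v => a ≤ x v)) =
      (∑ b ∈ (Finset.image x Finset.univ).filter (fun b => a ≤ b),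
        ∑ c ∈ (Finset.image x Finset.univ).filter (fun c => ¬ a ≤ c),
          ∑ e : G.E,
            if ({(G.mem e).sup' (G.mem_nonempty e) x,
                 (G.mem e).inf' (G.mem_nonempty e) x} : Set ℝ) = {b, c}
            then G.w e else 0)
      / min
          (∑ b ∈ (Finset.image x Finset.univ).filter (fun b => a ≤ b),
            ∑ v ∈ Finset.univ.filter (fun v => x v = b), G.deg v)
          (∑ c ∈ (Finset.image x Finset.univ).filter (fun c => ¬ a ≤ c),
            ∑ v ∈ Finset.univ.filter (fun v => x v = c), G.deg v) :=
  sweep_cond_eq_contracted_general G x a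

end WHG
end

section
/- Let G = (V, E, w) be a weighted hypergraph with positive degrees, let x ∈ ℝ^V, and let G' be any weighted graph in the family 𝒢(G, x). Then for every ∅ ⊊ S ⊊ V, φ_{G'}(S) ≤ φ_G(S); in particular, φ_{G'} ≤ φ_G. -/
open Finset
open scoped Classical

theorem Finset.sum_compl_add_le_sum {α : Type*} [Fintype α] [DecidableEq α]
    {f : α → α → ℝ} (hf : ∀ u v, 0 ≤ f u v) (S : Finset α) :
    ∑ u ∈ S, ∑ v ∈ Sᶜ, (f u v + f v u) ≤ ∑ u, ∑ v, f u v := by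
  have inner_le : ∀ u (T : Finset α), ∑ v ∈ T, f u v ≤ ∑ v, f u v := fun u T =>
    sum_le_sum_of_subset_of_nonneg (subset_univ T) fun v _ _ => hf u v
  calc ∑ u ∈ S, ∑ v ∈ Sᶜ, (f u v + f v u)
      = ∑ u ∈ S, ∑ v ∈ Sᶜ, f u v + ∑ u ∈ Sᶜ, ∑ v ∈ S, f u v := by
        rw [sum_comm (s := Sᶜ) (f := fun u v => f u v), ← sum_add_distrib]
        simp only [sum_add_distrib]
    _ ≤ ∑ u ∈ S, ∑ v, f u v + ∑ u ∈ Sᶜ, ∑ v, f u v :=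
        add_le_add (sum_le_sum fun u _ => inner_le u _) (sum_le_sum fun u _ => inner_le u _)
    _ = ∑ u, ∑ v, f u v := sum_add_sum_compl S _

theorem Finset.sum_compl_add_eq_zero_of_not_crossing {α : Type*} [Fintype α]
    [DecidableEq α] {f : α → α → ℝ} {S T : Finset α} (hT : ∀ u v, f u v ≠ 0 → u ∈ T ∧ v ∈ T)
    (hS : ¬((T ∩ S).Nonempty ∧ (T \ S).Nonempty)) :
    ∑ u ∈ S, ∑ v ∈ Sᶜ, (f u v + f v u) = 0 := by
  have not_both : ∀ u ∈ S, ∀ v ∉ S, u ∈ T → v ∈ T → False := fun u hu v hv huT hvT =>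
    hS ⟨⟨u, mem_inter.2 ⟨huT, hu⟩⟩, ⟨v, mem_sdiff.2 ⟨hvT, hv⟩⟩⟩
  refine sum_eq_zero fun u hu => sum_eq_zero fun v hv => ?_
  rw [mem_compl] at hv
  have huv : f u v = 0 := by_contra fun h => not_both u hu v hv (hT u v h).1 (hT u v h).2
  have hvu : f v u = 0 := by_contra fun h => not_both u hu v hv (hT v u h).2 (hT v u h).1
  rw [huv, hvu, add_zero]

theorem sInf_setOf_le_sInf_setOf {α β : Type*} [ConditionallyCompleteLattice β]
    {P : α → Prop} {f g : α → β} {b : β} (hb : ∀ a, P a → b ≤ f a)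
    (hfg : ∀ a, P a → f a ≤ g a) :
    sInf {c | ∃ a, P a ∧ c = f a} ≤ sInf {c | ∃ a, P a ∧ c = g a} := by
  have eq_range : ∀ h : α → β,
      {c | ∃ a, P a ∧ c = h a} = Set.range fun a : {a // P a} => h a := fun h => by
    ext c
    simp only [Set.mem_ofPred_eq, Set.mem_range, Subtype.exists]
    grind
  rw [eq_range f, eq_range g]
  exact ciInf_mono ⟨b, by rintro _ ⟨a, rfl⟩; exact hb a a.2⟩ fun a => hfg a a.2

namespace WHG

variable {V : Type} [Fintype V] [DecidableEq V] (G : WHG V)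

theorem deg_nonneg (v : V) : 0 ≤ G.deg v :=
  sum_nonneg fun e _ => by split_ifs <;> simp [(G.w_pos e).le]

theorem vol_nonneg (S : Finset V) : 0 ≤ G.vol S :=
  sum_nonneg fun v _ => G.deg_nonneg v

variable {G} {x : V → ℝ} {A : Matrix V V ℝ}

/-- Each hyperedge `e` spreads its weight over pairs inside `e`, so it contributes to the cut of
`S` in the graph at most `w e`, and nothing unless it crosses `S`. -/
theorem GraphFamily.sum_compl_le_cut (hA : G.GraphFamily x A) (S : Finset V) :
    ∑ u ∈ S, ∑ v ∈ Sᶜ, A u v ≤ G.cut S := by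
  obtain ⟨-, -, -, w', hw'_nonneg, hw'_supp, hw'_sum, hA_off⟩ := hA
  calc ∑ u ∈ S, ∑ v ∈ Sᶜ, A u v
      = ∑ u ∈ S, ∑ v ∈ Sᶜ, ∑ e, (w' e u v + w' e v u) :=
        sum_congr rfl fun u hu => sum_congr rfl fun v hv =>
          hA_off u v (ne_of_mem_of_not_mem hu (mem_compl.1 hv))
    _ = ∑ e, ∑ u ∈ S, ∑ v ∈ Sᶜ, (w' e u v + w' e v u) := by
        simp only [sum_comm (s := Sᶜ) (t := univ), sum_comm (s := S) (t := univ)]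
    _ ≤ G.cut S := by
        refine sum_le_sum fun e _ => ?_
        split_ifs with hcross
        · exact hw'_sum e ▸ sum_compl_add_le_sum (hw'_nonneg e) S
        · exact (sum_compl_add_eq_zero_of_not_crossing
            (fun u v h => ⟨(hw'_supp e u v h).1.1, (hw'_supp e u v h).2.1⟩) hcross).le

theorem GraphFamily.cond_le (hA : G.GraphFamily x A) (S : Finset V) :
    (∑ u ∈ S, ∑ v ∈ Sᶜ, A u v) / min (G.vol S) (G.vol Sᶜ) ≤ G.cond S :=
  div_le_div_of_nonneg_right (hA.sum_compl_le_cut S) (le_min (G.vol_nonneg S) (G.vol_nonneg Sᶜ))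

theorem graphFamily_cond_le_general {V : Type} [Fintype V] [DecidableEq V] (G : WHG V)
    (x : V → ℝ) (A : Matrix V V ℝ)
    (hA : G.GraphFamily x A) :
    (∀ S : Finset V, S.Nonempty → S ≠ Finset.univ →
      (∑ u ∈ S, ∑ u' ∈ Sᶜ, A u u') / min (G.vol S) (G.vol Sᶜ) ≤ G.cond S) ∧
    sInf {c | ∃ S : Finset V, S.Nonempty ∧ S ≠ Finset.univ ∧
        c = (∑ u ∈ S, ∑ u' ∈ Sᶜ, A u u') / min (G.vol S) (G.vol Sᶜ)}
      ≤ G.condG := by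
  refine ⟨fun S _ _ => hA.cond_le S, ?_⟩
  have hA_nonneg : ∀ u v, 0 ≤ A u v := hA.2.1
  have ratio_nonneg (S : Finset V) :
      0 ≤ (∑ u ∈ S, ∑ u' ∈ Sᶜ, A u u') / min (G.vol S) (G.vol Sᶜ) :=
    div_nonneg (sum_nonneg fun u _ => sum_nonneg fun v _ => hA_nonneg u v)
      (le_min (G.vol_nonneg S) (G.vol_nonneg Sᶜ))
  simpa only [condG, and_assoc] using
    sInf_setOf_le_sInf_setOf (P := fun S : Finset V => S.Nonempty ∧ S ≠ univ)
      (fun S _ => ratio_nonneg S) (fun S _ => hA.cond_le S)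

/-- for any collapsed graph `G' ∈ 𝒢(G, x)` the conductance of every
nontrivial vertex set does not exceed its conductance in `G`; in particular
`φ_{G'} ≤ φ_G`. -/
theorem graphFamily_cond_le {V : Type} [Fintype V] [DecidableEq V] (G : WHG V)
    (hd : ∀ v, 0 < G.deg v) (x : V → ℝ) (A : Matrix V V ℝ)
    (hA : G.GraphFamily x A) :
    (∀ S : Finset V, S.Nonempty → S ≠ Finset.univ →
      (∑ u ∈ S, ∑ u' ∈ Sᶜ, A u u') / min (G.vol S) (G.vol Sᶜ) ≤ G.cond S) ∧
    sInf {c | ∃ S : Finset V, S.Nonempty ∧ S ≠ Finset.univ ∧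
        c = (∑ u ∈ S, ∑ u' ∈ Sᶜ, A u u') / min (G.vol S) (G.vol Sᶜ)}
      ≤ G.condG :=
  graphFamily_cond_le_general G x A hA

end WHG
end

section
/- Let H be a weighted graph on a finite vertex set V with positive degrees, let s ∈ ℝ^V with ∑_{v ∈ V} s(v) = 1, and define f(Δ) = sᵀ D⁻¹ (e^{−Δ𝓛} s − π). Let Δ ≥ 0 with f(Δ) > 0, and set μ = D⁻¹ e^{−(Δ/2)𝓛} s. Then the function Δ ↦ log f(Δ) is differentiable at Δ with derivative equal to −R(μ − (1/vol(V))𝟙), where R(z) = zᵀ(D − A)z / (zᵀ D z) is the Rayleigh quotient and 𝟙 is the all-one vector. -/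
/-!
The heat operator `P_t = e^{-t𝓛}` is self-adjoint for `⟨x, y⟩ = xᵀ D⁻¹ y`, because `D⁻¹ 𝓛 =
D⁻¹ (D - A) D⁻¹` is symmetric, and it preserves total mass, because `𝟙ᵀ 𝓛 = 0`. With
`w = P_{Δ/2} s`, the semigroup law gives `f(Δ) = ⟨w, w⟩ - 1/vol(V)` and
`f'(Δ) = -⟨s, 𝓛 P_Δ s⟩ = -⟨w, 𝓛 w⟩`. For `μ = D⁻¹ w`, `∑ w = 1` turns these into the denominator
and the numerator of the Rayleigh quotient of `μ - 𝟙/vol(V)`; the numerator does not see the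
shift since `(D - A) 𝟙 = 0`. Finally `(log f)' = f'/f`.
-/

open Finset
open scoped Classical

namespace GraphHeat

variable {V : Type} [Fintype V] [DecidableEq V]

/-- Degree in a weighted graph given by its adjacency matrix. -/
noncomputable def deg (A : Matrix V V ℝ) (v : V) : ℝ := ∑ u, A v u

/-- Normalized Laplacian `𝓛 = I − A D⁻¹`. -/
noncomputable def nlap (A : Matrix V V ℝ) : Matrix V V ℝ :=
  1 - A * Matrix.diagonal (fun v => (deg A v)⁻¹)

/-- The heat semigroup `e^{−Δ𝓛} s`. -/
noncomputable def heat (A : Matrix V V ℝ) (Δ : ℝ) (s : V → ℝ) : V → ℝ :=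
  (NormedSpace.exp (-(Δ • nlap A))).mulVec s

/-- Stationary vector `π`. -/
noncomputable def piV (A : Matrix V V ℝ) : V → ℝ := fun v => deg A v / ∑ u, deg A u

open Matrix NormedSpace

section
variable {m 𝔸 : Type*} [Fintype m] [DecidableEq m] [RCLike 𝔸]
open scoped Norms.Operator

theorem _root_.Matrix.vecMul_exp_of_vecMul_eq_zero {M : Matrix m m 𝔸} {x : m → 𝔸}
    (h : x ᵥ* M = 0) : x ᵥ* exp M = x := by
  have hx : SemiconjBy (replicateRow m x) M 0 := by
    rw [SemiconjBy, ← replicateRow_vecMul, h, zero_mul]; rfl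
  have hexp := hx.exp_right
  rw [SemiconjBy, exp_zero, one_mul, ← replicateRow_vecMul] at hexp
  funext j
  exact congrFun (congrFun hexp j) j

theorem _root_.Matrix.mul_exp_eq_exp_transpose_mul {B M : Matrix m m 𝔸} (h : B * M = Mᵀ * B) :
    B * exp M = (exp M)ᵀ * B := by
  rw [← exp_transpose]
  exact SemiconjBy.exp_right h

end

theorem _root_.Matrix.IsSymm.dotProduct_mulVec_sub_of_mulVec_eq_zero {m R : Type*} [Fintype m]
    [CommRing R] {M : Matrix m m R} (hM : M.IsSymm) {c : m → R} (hc : M *ᵥ c = 0) (x : m → R) :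
    (x - c) ⬝ᵥ M *ᵥ (x - c) = x ⬝ᵥ M *ᵥ x := by
  have hc' : c ᵥ* M = 0 := by rw [← hM.eq, vecMul_transpose, hc]
  rw [mulVec_sub, hc, sub_zero, sub_dotProduct, dotProduct_mulVec c, hc', zero_dotProduct,
    sub_zero]

theorem _root_.Matrix.dotProduct_mulVec_eq_sum_sum {m R : Type*} [Fintype m] [CommRing R]
    (M : Matrix m m R) (x : m → R) : x ⬝ᵥ M *ᵥ x = ∑ u, ∑ v, M u v * x u * x v := by
  simp only [dotProduct, mulVec, Finset.mul_sum]
  exact Finset.sum_congr rfl fun u _ => Finset.sum_congr rfl fun v _ => by ring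

section
variable (A : Matrix V V ℝ)

noncomputable def degInv : Matrix V V ℝ := diagonal fun v => (deg A v)⁻¹

noncomputable def lap : Matrix V V ℝ := diagonal (deg A) - A

theorem nlap_eq : nlap A = 1 - A * degInv A := rfl

theorem heat_eq (t : ℝ) (s : V → ℝ) : heat A t s = exp (t • -nlap A) *ᵥ s := by
  rw [heat, smul_neg]

theorem lap_mulVec_const (c : ℝ) : lap A *ᵥ (fun _ => c) = 0 := by
  rw [lap, sub_mulVec, sub_eq_zero]
  funext v
  rw [mulVec_diagonal]
  simp [mulVec, dotProduct, deg, Finset.sum_mul]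

variable {A}

theorem lap_isSymm (hsym : A.IsSymm) : (lap A).IsSymm := by
  simp only [lap, IsSymm, transpose_sub, diagonal_transpose, hsym.eq]

omit [DecidableEq V] in
theorem vecMul_deg_eq (hsym : A.IsSymm) : (1 : V → ℝ) ᵥ* A = deg A := by
  funext v
  simp only [vecMul, dotProduct, Pi.one_apply, one_mul, deg]
  exact Finset.sum_congr rfl fun u _ => hsym.apply v u

theorem degInv_mul_diagonal_deg (hd : ∀ v, 0 < deg A v) : degInv A * diagonal (deg A) = 1 := by
  rw [degInv, diagonal_mul_diagonal, ← diagonal_one]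
  exact congrArg diagonal (funext fun v => inv_mul_cancel₀ (hd v).ne')

theorem degInv_mul_nlap (hd : ∀ v, 0 < deg A v) :
    degInv A * nlap A = degInv A * lap A * degInv A := by
  rw [nlap_eq, lap, Matrix.mul_sub, Matrix.mul_sub, Matrix.sub_mul, degInv_mul_diagonal_deg hd,
    Matrix.mul_one, Matrix.one_mul, Matrix.mul_assoc]

theorem degInv_mul_nlap_eq_transpose_mul (hsym : A.IsSymm) (hd : ∀ v, 0 < deg A v) :
    degInv A * nlap A = (nlap A)ᵀ * degInv A := by
  have hDinv : (degInv A)ᵀ = degInv A := diagonal_transpose _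
  calc degInv A * nlap A = (degInv A * nlap A)ᵀ := by
        rw [degInv_mul_nlap hd, transpose_mul, transpose_mul, hDinv, (lap_isSymm hsym).eq,
          Matrix.mul_assoc]
    _ = (nlap A)ᵀ * degInv A := by rw [transpose_mul, hDinv]

theorem vecMul_nlap (hsym : A.IsSymm) (hd : ∀ v, 0 < deg A v) : (1 : V → ℝ) ᵥ* nlap A = 0 := by
  rw [nlap_eq, vecMul_sub, vecMul_one, ← vecMul_vecMul, vecMul_deg_eq hsym]
  funext v
  simp [degInv, vecMul_diagonal, mul_inv_cancel₀ (hd v).ne']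

theorem lap_apply (u v : V) : lap A u v = (if u = v then deg A u else 0) - A u v := rfl

variable (A)

section
open scoped Norms.Operator

theorem heat_add (t₁ t₂ : ℝ) (s : V → ℝ) : heat A (t₁ + t₂) s = heat A t₁ (heat A t₂ s) := by
  rw [heat_eq, heat_eq, heat_eq, mulVec_mulVec, add_smul,
    Matrix.exp_add_of_commute _ _ (((Commute.refl _).smul_left t₁).smul_right t₂)]

theorem nlap_mulVec_heat (t : ℝ) (s : V → ℝ) :
    nlap A *ᵥ heat A t s = heat A t (nlap A *ᵥ s) := by
  rw [heat_eq, heat_eq, mulVec_mulVec, mulVec_mulVec,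
    (((Commute.refl (nlap A)).neg_right.smul_right t).exp_right).eq]

theorem hasDerivAt_heat (s : V → ℝ) (t : ℝ) :
    HasDerivAt (fun t => heat A t s) (-(nlap A *ᵥ heat A t s)) t := by
  let applyTo : Matrix V V ℝ →L[ℝ] V → ℝ :=
    (LinearMap.applyₗ s ∘ₗ Matrix.toLin'.toLinearMap).toContinuousLinearMap
  have h : HasDerivAt (fun u => heat A u s) (applyTo (-nlap A * exp (t • -nlap A))) t := by
    simp only [heat_eq]
    exact applyTo.hasFDerivAt.comp_hasDerivAt t (hasDerivAt_exp_smul_const' (-nlap A) t)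
  refine h.congr_deriv ?_
  rw [heat_eq, mulVec_mulVec, ← neg_mulVec, ← Matrix.neg_mul]
  rfl

end

variable {A}

theorem sum_heat (hsym : A.IsSymm) (hd : ∀ v, 0 < deg A v) (t : ℝ) (s : V → ℝ) :
    ∑ v, heat A t s v = ∑ v, s v := by
  have hkill : (1 : V → ℝ) ᵥ* (t • -nlap A) = 0 := by
    rw [vecMul_smul, vecMul_neg, vecMul_nlap hsym hd, neg_zero, smul_zero]
  rw [← one_dotProduct, ← one_dotProduct, heat_eq, dotProduct_mulVec,
    vecMul_exp_of_vecMul_eq_zero hkill]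

theorem dotProduct_degInv_mulVec_heat (hsym : A.IsSymm) (hd : ∀ v, 0 < deg A v) (t : ℝ)
    (x y : V → ℝ) : x ⬝ᵥ degInv A *ᵥ heat A t y = heat A t x ⬝ᵥ degInv A *ᵥ y := by
  have h := mul_exp_eq_exp_transpose_mul (B := degInv A) (M := t • -nlap A) (by
    rw [Matrix.mul_smul, Matrix.mul_neg, degInv_mul_nlap_eq_transpose_mul hsym hd, transpose_smul,
      transpose_neg, Matrix.smul_mul, Matrix.neg_mul])
  rw [heat_eq, heat_eq, mulVec_mulVec, h, ← mulVec_mulVec, dotProduct_mulVec, vecMul_transpose]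

omit [DecidableEq V] in
theorem sum_mul_piV_div_deg (hd : ∀ v, 0 < deg A v) (x : V → ℝ) :
    ∑ v, x v * piV A v / deg A v = (∑ v, x v) / ∑ u, deg A u := by
  rw [Finset.sum_div]
  refine Finset.sum_congr rfl fun v _ => ?_
  rw [piV, mul_div_assoc, div_div_cancel_left' (hd v).ne', div_eq_mul_inv]

theorem sum_mul_div_deg (x y : V → ℝ) : ∑ v, x v * y v / deg A v = x ⬝ᵥ degInv A *ᵥ y := by
  simp only [dotProduct, degInv, mulVec_diagonal]
  exact Finset.sum_congr rfl fun v _ => by ring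

theorem sum_deg_mul_sq_eq_dotProduct (hd : ∀ v, 0 < deg A v) (w : V → ℝ) (hw : ∑ v, w v = 1) :
    ∑ v, deg A v * (w v / deg A v - 1 / ∑ u, deg A u) ^ 2
      = w ⬝ᵥ degInv A *ᵥ w - 1 / ∑ u, deg A u := by
  set vol := ∑ u, deg A u
  have hvol : 0 < vol := by
    obtain ⟨v₀⟩ : Nonempty V := by
      by_contra h
      simp [not_nonempty_iff.1 h] at hw
    exact Finset.sum_pos (fun v _ => hd v) ⟨v₀, Finset.mem_univ _⟩
  have hterm : ∀ v, deg A v * (w v / deg A v - 1 / vol) ^ 2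
      = w v * w v / deg A v - 2 / vol * w v + deg A v / vol ^ 2 := by
    intro v
    field_simp [(hd v).ne']
    ring
  rw [Finset.sum_congr rfl fun v _ => hterm v, Finset.sum_add_distrib, Finset.sum_sub_distrib,
    sum_mul_div_deg, ← Finset.mul_sum, hw, ← Finset.sum_div]
  field_simp
  ring

theorem sum_lap_mul_mul_eq_dotProduct (hsym : A.IsSymm) (hd : ∀ v, 0 < deg A v) (w : V → ℝ)
    (c : ℝ) :
    ∑ u, ∑ v, lap A u v * (w u / deg A u - c) * (w v / deg A v - c)
      = w ⬝ᵥ degInv A *ᵥ (nlap A *ᵥ w) := by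
  have hz : (fun v => w v / deg A v - c) = degInv A *ᵥ w - fun _ => c := by
    funext v
    simp [degInv, mulVec_diagonal, div_eq_inv_mul]
  have hDinv : ∀ y, (degInv A *ᵥ w) ⬝ᵥ y = w ⬝ᵥ degInv A *ᵥ y := fun y => by
    rw [dotProduct_mulVec, ← vecMul_transpose, degInv, diagonal_transpose]
  rw [← dotProduct_mulVec_eq_sum_sum, hz,
    (lap_isSymm hsym).dotProduct_mulVec_sub_of_mulVec_eq_zero (lap_mulVec_const A c),
    hDinv]
  simp only [mulVec_mulVec, degInv_mul_nlap hd, Matrix.mul_assoc]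

noncomputable def heatDeviation (A : Matrix V V ℝ) (s : V → ℝ) (t : ℝ) : ℝ :=
  ∑ v, s v * (heat A t s v - piV A v) / deg A v

theorem heatDeviation_eq (hsym : A.IsSymm) (hd : ∀ v, 0 < deg A v) {s : V → ℝ}
    (hs : ∑ v, s v = 1) (t : ℝ) :
    heatDeviation A s t
      = heat A (t / 2) s ⬝ᵥ degInv A *ᵥ heat A (t / 2) s - 1 / ∑ u, deg A u := by
  simp only [heatDeviation, mul_sub, sub_div, Finset.sum_sub_distrib]
  rw [sum_mul_div_deg, ← add_halves t, heat_add, dotProduct_degInv_mulVec_heat hsym hd,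
    sum_mul_piV_div_deg hd, hs, add_halves]

theorem hasDerivAt_heatDeviation (hsym : A.IsSymm) (hd : ∀ v, 0 < deg A v) (s : V → ℝ)
    (t : ℝ) : HasDerivAt (heatDeviation A s)
      (-(heat A (t / 2) s ⬝ᵥ degInv A *ᵥ (nlap A *ᵥ heat A (t / 2) s))) t := by
  have h : HasDerivAt (heatDeviation A s)
      (∑ v, s v * (-(nlap A *ᵥ heat A t s)) v / deg A v) t :=
    HasDerivAt.fun_sum fun v _ => (((hasDerivAt_pi.1 (hasDerivAt_heat A s t) v).sub_const
      (piV A v)).const_mul (s v)).div_const (deg A v)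
  have ht : heat A t s = heat A (t / 2) (heat A (t / 2) s) := by rw [← heat_add, add_halves]
  refine h.congr_deriv ?_
  rw [sum_mul_div_deg, ht, nlap_mulVec_heat, mulVec_neg, dotProduct_neg,
    dotProduct_degInv_mulVec_heat hsym hd]

end

theorem log_f_hasDerivAt_general {V : Type} [Fintype V] [DecidableEq V]
    (A : Matrix V V ℝ) (hsym : A.IsSymm)
    (hd : ∀ v, 0 < deg A v) (s : V → ℝ) (hs : ∑ v, s v = 1) (Δ : ℝ)
    (hf : 0 < ∑ v, s v * (heat A Δ s v - piV A v) / deg A v) :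
    let z : V → ℝ := fun v => heat A (Δ/2) s v / deg A v - 1 / ∑ u, deg A u
    HasDerivAt (fun Δ' => Real.log (∑ v, s v * (heat A Δ' s v - piV A v) / deg A v))
      (-((∑ u, ∑ v, ((if u = v then deg A u else 0) - A u v) * z u * z v)
          / (∑ v, deg A v * z v ^ 2))) Δ := by
  intro z
  have hmass : ∑ v, heat A (Δ / 2) s v = 1 := (sum_heat hsym hd _ _).trans hs
  show HasDerivAt (fun t => Real.log (heatDeviation A s t)) _ Δ
  convert (hasDerivAt_heatDeviation hsym hd s Δ).log hf.ne' using 1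
  simp only [z, ← lap_apply]
  rw [sum_lap_mul_mul_eq_dotProduct hsym hd, sum_deg_mul_sq_eq_dotProduct hd _ hmass,
    ← heatDeviation_eq hsym hd hs, neg_div]

/-- Lemma 4.2: `Δ ↦ log f(Δ)` with `f(Δ) = sᵀ D⁻¹(e^{−Δ𝓛}s − π)` is
differentiable at any `Δ ≥ 0` with `f(Δ) > 0`, with derivative the negated Rayleigh
quotient of `μ − (1/vol(V))𝟙`, where `μ = D⁻¹ e^{−(Δ/2)𝓛} s`. -/
theorem log_f_hasDerivAt {V : Type} [Fintype V] [DecidableEq V]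
    (A : Matrix V V ℝ) (hsym : A.IsSymm) (hnn : ∀ u v, 0 ≤ A u v)
    (hd : ∀ v, 0 < deg A v) (s : V → ℝ) (hs : ∑ v, s v = 1) (Δ : ℝ) (hΔ : 0 ≤ Δ)
    (hf : 0 < ∑ v, s v * (heat A Δ s v - piV A v) / deg A v) :
    let z : V → ℝ := fun v => heat A (Δ/2) s v / deg A v - 1 / ∑ u, deg A u
    HasDerivAt (fun Δ' => Real.log (∑ v, s v * (heat A Δ' s v - piV A v) / deg A v))
      (-((∑ u, ∑ v, ((if u = v then deg A u else 0) - A u v) * z u * z v)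
          / (∑ v, deg A v * z v ^ 2))) Δ :=
  log_f_hasDerivAt_general A hsym hd s hs Δ hf

end GraphHeat
end

section
/- Let H be a weighted graph on a finite vertex set V with positive degrees, let s ∈ ℝ^V with ∑_{v ∈ V} s(v) = 1, and define f(Δ) = sᵀ D⁻¹ (e^{−Δ𝓛} s − π). Then for every Δ ≥ 0, f(Δ) · (sᵀ D⁻¹ 𝓛² e^{−Δ𝓛} s) ≥ (sᵀ D⁻¹ 𝓛 e^{−Δ𝓛} s)². Consequently, if s ≠ π, then f(Δ) > 0 for all Δ ≥ 0 and the function Δ ↦ log f(Δ) is convex on [0, ∞). -/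
/-!
Write `z = s - π` and `⟪x, y⟫ = ∑ v, x v * y v / d v`. The Laplacian `𝓛` is self-adjoint for
this inner product and kills `π`, so `e^{-Δ𝓛}` fixes `π`, and `⟪π, z⟫ = 0` because `∑ z = 0`.
Hence the three sums in the statement are the moments `m_k(Δ) = ⟪z, 𝓛^k e^{-Δ𝓛} z⟫`,
`k = 0, 1, 2`. With `u = e^{-Δ𝓛/2} z` they read `⟪u, u⟫`, `⟪u, 𝓛 u⟫`, `⟪𝓛 u, 𝓛 u⟫`, so the
inequality is Cauchy–Schwarz, and `m_0 > 0` for `z ≠ 0` since `e^{-Δ𝓛/2}` is invertible.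
Finally `m_0' = -m_1` and `m_1' = -m_2`, so `(log m_0)'' = (m_0 m_2 - m_1²) / m_0² ≥ 0`.
-/

open Finset
open scoped Classical

namespace GraphHeat

variable {V : Type} [Fintype V] [DecidableEq V]

open Matrix

noncomputable def weightedInner {ι : Type*} [Fintype ι] (w x y : ι → ℝ) : ℝ :=
  ∑ i, x i * y i / w i

def IsWeightedSelfAdjoint {ι : Type*} [Fintype ι] [DecidableEq ι] (w : ι → ℝ)
    (M : Matrix ι ι ℝ) : Prop :=
  Mᵀ * diagonal w⁻¹ = diagonal w⁻¹ * M

lemma convexOn_log_of_sq_deriv_le {F F' F'' : ℝ → ℝ} (hpos : ∀ t, 0 < F t)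
    (hF : ∀ t, HasDerivAt F (F' t) t) (hF' : ∀ t, HasDerivAt F' (F'' t) t)
    (h : ∀ t, F' t ^ 2 ≤ F t * F'' t) : ConvexOn ℝ Set.univ (fun t => Real.log (F t)) := by
  refine convexOn_of_hasDerivWithinAt2_nonneg convex_univ (f' := fun t => F' t / F t)
    (f'' := fun t => (F'' t * F t - F' t * F' t) / F t ^ 2)
    (HasDerivAt.continuousOn fun t _ => (hF t).log (hpos t).ne')
    (fun t _ => ((hF t).log (hpos t).ne').hasDerivWithinAt)
    (fun t _ => ((hF' t).div (hF t) (hpos t).ne').hasDerivWithinAt)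
    (fun t _ => div_nonneg ?_ (sq_nonneg _))
  nlinarith [h t]

section Weighted

variable {ι : Type*} [Fintype ι] {w : ι → ℝ}

lemma weightedInner_add_left (x x' y : ι → ℝ) :
    weightedInner w (x + x') y = weightedInner w x y + weightedInner w x' y := by
  simp only [weightedInner, Pi.add_apply, add_mul, add_div, sum_add_distrib]

lemma weightedInner_smul_left (c : ℝ) (x y : ι → ℝ) :
    weightedInner w (c • x) y = c * weightedInner w x y := by
  simp only [weightedInner, Pi.smul_apply, smul_eq_mul, mul_assoc, mul_div_assoc, mul_sum]

lemma weightedInner_neg_right (x y : ι → ℝ) :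
    weightedInner w x (-y) = -weightedInner w x y := by
  simp only [weightedInner, Pi.neg_apply, mul_neg, neg_div, sum_neg_distrib]

lemma weightedInner_sq_le (hw : ∀ i, 0 < w i) (x y : ι → ℝ) :
    weightedInner w x y ^ 2 ≤ weightedInner w x x * weightedInner w y y :=
  sum_sq_le_sum_mul_sum_of_sq_le_mul _
    (fun v _ => div_nonneg (mul_self_nonneg _) (hw v).le)
    (fun v _ => div_nonneg (mul_self_nonneg _) (hw v).le)
    (fun v _ => le_of_eq (by ring))

lemma weightedInner_self_pos (hw : ∀ i, 0 < w i) {x : ι → ℝ} (hx : x ≠ 0) :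
    0 < weightedInner w x x := by
  obtain ⟨v, hv⟩ := Function.ne_iff.mp hx
  exact sum_pos' (fun u _ => div_nonneg (mul_self_nonneg _) (hw u).le)
    ⟨v, mem_univ v, div_pos (mul_self_pos.mpr hv) (hw v)⟩

open scoped Matrix.Norms.Operator in
lemma HasDerivAt.weightedInner_mulVec {f : ℝ → Matrix ι ι ℝ} {f' : Matrix ι ι ℝ} {t : ℝ}
    (x y : ι → ℝ) (hf : HasDerivAt f f' t) :
    HasDerivAt (fun t => weightedInner w x (f t *ᵥ y)) (weightedInner w x (f' *ᵥ y)) t := by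
  let Φ : Matrix ι ι ℝ →ₗ[ℝ] ℝ :=
    { toFun := fun X => weightedInner w x (X *ᵥ y)
      map_add' := fun X Y => by
        simp only [weightedInner, add_mulVec, Pi.add_apply, mul_add, add_div, sum_add_distrib]
      map_smul' := fun c X => by
        simp only [weightedInner, smul_mulVec, Pi.smul_apply, smul_eq_mul, RingHom.id_apply,
          mul_sum]
        exact sum_congr rfl fun i _ => by ring }
  exact (LinearMap.toContinuousLinearMap Φ).hasFDerivAt.comp_hasDerivAt t hf

variable [DecidableEq ι]

lemma weightedInner_eq_dotProduct (x y : ι → ℝ) :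
    weightedInner w x y = x ⬝ᵥ (diagonal w⁻¹ *ᵥ y) := by
  simp only [weightedInner, dotProduct, mulVec_diagonal, Pi.inv_apply]
  exact sum_congr rfl fun v _ => by ring

namespace IsWeightedSelfAdjoint

variable {M N : Matrix ι ι ℝ}

lemma weightedInner_mulVec (hM : IsWeightedSelfAdjoint w M) (x y : ι → ℝ) :
    weightedInner w x (M *ᵥ y) = weightedInner w (M *ᵥ x) y := by
  rw [weightedInner_eq_dotProduct, weightedInner_eq_dotProduct, mulVec_mulVec, ← hM,
    ← mulVec_mulVec, dotProduct_mulVec, vecMul_transpose]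

lemma smul (hM : IsWeightedSelfAdjoint w M) (c : ℝ) : IsWeightedSelfAdjoint w (c • M) := by
  rw [IsWeightedSelfAdjoint, Matrix.transpose_smul, Matrix.smul_mul, Matrix.mul_smul, hM]

lemma mul (hM : IsWeightedSelfAdjoint w M) (hN : IsWeightedSelfAdjoint w N) (h : Commute M N) :
    IsWeightedSelfAdjoint w (M * N) := by
  rw [IsWeightedSelfAdjoint, transpose_mul, Matrix.mul_assoc, hM, ← Matrix.mul_assoc, hN,
    Matrix.mul_assoc, h.eq]

lemma pow (hM : IsWeightedSelfAdjoint w M) (k : ℕ) : IsWeightedSelfAdjoint w (M ^ k) := by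
  induction k with
  | zero => simp [IsWeightedSelfAdjoint]
  | succ k ih => rw [pow_succ]; exact ih.mul hM ((Commute.refl M).pow_left k)

lemma exp (hw : ∀ i, w i ≠ 0) (hM : IsWeightedSelfAdjoint w M) :
    IsWeightedSelfAdjoint w (NormedSpace.exp M) := by
  have hinv : diagonal w * diagonal w⁻¹ = 1 := by
    rw [diagonal_mul_diagonal, ← diagonal_one]
    exact congrArg diagonal (funext fun v => mul_inv_cancel₀ (hw v))
  have hinv' : diagonal w⁻¹ * diagonal w = 1 := by
    rw [diagonal_mul_diagonal, ← diagonal_one]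
    exact congrArg diagonal (funext fun v => inv_mul_cancel₀ (hw v))
  let U : (Matrix ι ι ℝ)ˣ := ⟨diagonal w, diagonal w⁻¹, hinv, hinv'⟩
  have hconj : Mᵀ = ((U⁻¹ : (Matrix ι ι ℝ)ˣ) : Matrix ι ι ℝ) * M * (U : Matrix ι ι ℝ) := by
    change Mᵀ = diagonal w⁻¹ * M * diagonal w
    rw [← hM, Matrix.mul_assoc, hinv', Matrix.mul_one]
  have hexp : (NormedSpace.exp M)ᵀ = diagonal w⁻¹ * NormedSpace.exp M * diagonal w := by
    rw [← Matrix.exp_transpose, hconj, Matrix.exp_units_conj']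
    rfl
  rw [IsWeightedSelfAdjoint, hexp, Matrix.mul_assoc, hinv, Matrix.mul_one]

end IsWeightedSelfAdjoint

end Weighted

section MatrixExp

variable {ι : Type*} [Fintype ι] [DecidableEq ι]

open scoped Matrix.Norms.Operator in
lemma exp_mulVec_of_mulVec_eq_zero {M : Matrix ι ι ℝ} {x : ι → ℝ} (h : M *ᵥ x = 0) :
    NormedSpace.exp M *ᵥ x = x := by
  have hsum := (NormedSpace.exp_series_hasSum_exp' (𝕂 := ℝ) M).map (mulVec.addMonoidHomLeft x)
    (continuous_id.matrix_mulVec continuous_const)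
  have hterm : ∀ n ≠ 0,
      (mulVec.addMonoidHomLeft x ∘ fun n : ℕ => (n.factorial⁻¹ : ℝ) • M ^ n) n = 0 := by
    intro n hn
    obtain ⟨n, rfl⟩ := Nat.exists_eq_succ_of_ne_zero hn
    simp [mulVec.addMonoidHomLeft, smul_mulVec, pow_succ, ← mulVec_mulVec, h]
  -- `hsum` lives in the operator-norm topology, which agrees with the product topology only up to
  -- unfolding, hence `rfl` rather than a rewrite.
  convert hsum.unique (hasSum_single 0 hterm) using 1
  · rfl
  · simp [mulVec.addMonoidHomLeft]

open scoped Matrix.Norms.Operator in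
lemma commute_exp_neg_smul (M : Matrix ι ι ℝ) (t : ℝ) : Commute M (NormedSpace.exp (-(t • M))) :=
  ((Commute.refl M).smul_right t).neg_right.exp_right

open scoped Matrix.Norms.Operator in
lemma hasDerivAt_pow_mul_exp_neg_smul (M : Matrix ι ι ℝ) (k : ℕ) (t : ℝ) :
    HasDerivAt (fun t : ℝ => M ^ k * NormedSpace.exp (-(t • M)))
      (-(M ^ (k + 1) * NormedSpace.exp (-(t • M)))) t := by
  have h := (hasDerivAt_exp_smul_const' (𝕂 := ℝ) (-M) t).const_mul (M ^ k)
  simp only [smul_neg, neg_mul, mul_neg, ← Matrix.mul_assoc, ← pow_succ] at h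
  exact h

end MatrixExp

section HeatMoment

variable {ι : Type*} [Fintype ι] [DecidableEq ι] {w : ι → ℝ} {M : Matrix ι ι ℝ}

noncomputable def heatMoment (w : ι → ℝ) (M : Matrix ι ι ℝ) (z : ι → ℝ) (k : ℕ) (t : ℝ) : ℝ :=
  weightedInner w z ((M ^ k * NormedSpace.exp (-(t • M))) *ᵥ z)

lemma hasDerivAt_heatMoment (z : ι → ℝ) (k : ℕ) (t : ℝ) :
    HasDerivAt (heatMoment w M z k) (-heatMoment w M z (k + 1) t) t := by
  have h := HasDerivAt.weightedInner_mulVec (w := w) z z (hasDerivAt_pow_mul_exp_neg_smul M k t)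
  rwa [neg_mulVec, weightedInner_neg_right] at h

lemma IsWeightedSelfAdjoint.exp_neg_smul (hw : ∀ i, w i ≠ 0) (hM : IsWeightedSelfAdjoint w M)
    (t : ℝ) : IsWeightedSelfAdjoint w (NormedSpace.exp (-(t • M))) := by
  simpa only [neg_smul] using (hM.smul (-t)).exp hw

lemma IsWeightedSelfAdjoint.pow_mul_exp_neg_smul (hw : ∀ i, w i ≠ 0)
    (hM : IsWeightedSelfAdjoint w M) (k : ℕ) (t : ℝ) :
    IsWeightedSelfAdjoint w (M ^ k * NormedSpace.exp (-(t • M))) :=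
  (hM.pow k).mul (hM.exp_neg_smul hw t) ((commute_exp_neg_smul M t).pow_left k)

lemma heatMoment_eq_weightedInner_half (hw : ∀ i, w i ≠ 0) (hM : IsWeightedSelfAdjoint w M)
    (z : ι → ℝ) (k : ℕ) (t : ℝ) :
    heatMoment w M z k t = weightedInner w (NormedSpace.exp (-((t / 2) • M)) *ᵥ z)
      (M ^ k *ᵥ NormedSpace.exp (-((t / 2) • M)) *ᵥ z) := by
  set B := NormedSpace.exp (-((t / 2) • M))
  have hB : IsWeightedSelfAdjoint w B := hM.exp_neg_smul hw (t / 2)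
  have hBB : NormedSpace.exp (-(t • M)) = B * B := by
    rw [← Matrix.exp_add_of_commute _ _ (Commute.refl _), ← neg_add, ← add_smul, add_halves]
  have hcomm : Commute (M ^ k) B := (commute_exp_neg_smul M (t / 2)).pow_left k
  rw [heatMoment, hBB, ← Matrix.mul_assoc, hcomm.eq, Matrix.mul_assoc, ← mulVec_mulVec,
    hB.weightedInner_mulVec, mulVec_mulVec]

lemma heatMoment_one_sq_le (hw : ∀ i, 0 < w i) (hM : IsWeightedSelfAdjoint w M) (z : ι → ℝ)
    (t : ℝ) : heatMoment w M z 1 t ^ 2 ≤ heatMoment w M z 0 t * heatMoment w M z 2 t := by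
  have hw' : ∀ i, w i ≠ 0 := fun i => (hw i).ne'
  simp only [heatMoment_eq_weightedInner_half hw' hM, pow_zero, one_mulVec, pow_one, pow_two M,
    ← mulVec_mulVec, hM.weightedInner_mulVec _ (M *ᵥ _)]
  exact weightedInner_sq_le hw _ _

lemma heatMoment_zero_pos (hw : ∀ i, 0 < w i) (hM : IsWeightedSelfAdjoint w M) {z : ι → ℝ}
    (hz : z ≠ 0) (t : ℝ) : 0 < heatMoment w M z 0 t := by
  rw [heatMoment_eq_weightedInner_half (fun i => (hw i).ne') hM, pow_zero, one_mulVec]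
  refine weightedInner_self_pos hw fun h => hz ?_
  exact mulVec_injective_of_isUnit (Matrix.isUnit_exp _) (h.trans (mulVec_zero _).symm)

lemma convexOn_log_heatMoment_zero (hw : ∀ i, 0 < w i) (hM : IsWeightedSelfAdjoint w M)
    {z : ι → ℝ} (hz : z ≠ 0) : ConvexOn ℝ Set.univ (fun t => Real.log (heatMoment w M z 0 t)) :=
  convexOn_log_of_sq_deriv_le (heatMoment_zero_pos hw hM hz) (hasDerivAt_heatMoment z 0)
    (fun t => neg_neg (heatMoment w M z 2 t) ▸ (hasDerivAt_heatMoment z 1 t).neg)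
    (fun t => by simpa only [neg_sq] using heatMoment_one_sq_le hw hM z t)

end HeatMoment

section Graph

variable {A : Matrix V V ℝ}

lemma isWeightedSelfAdjoint_nlap (hA : A.IsSymm) : IsWeightedSelfAdjoint (deg A) (nlap A) := by
  simp only [IsWeightedSelfAdjoint, nlap, Matrix.transpose_sub, Matrix.transpose_one,
    Matrix.transpose_mul, diagonal_transpose, hA.eq, Matrix.sub_mul, Matrix.mul_sub,
    Matrix.one_mul, Matrix.mul_one, Matrix.mul_assoc, Pi.inv_def]

lemma nlap_mulVec_piV (hd : ∀ v, deg A v ≠ 0) : nlap A *ᵥ piV A = 0 := by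
  have hconst : diagonal (fun v => (deg A v)⁻¹) *ᵥ piV A = fun _ => (∑ u, deg A u)⁻¹ := by
    ext v
    rw [mulVec_diagonal, piV, div_eq_mul_inv, ← mul_assoc, inv_mul_cancel₀ (hd v), one_mul]
  rw [nlap, sub_mulVec, one_mulVec, ← mulVec_mulVec, hconst, sub_eq_zero]
  ext v
  simp only [mulVec, dotProduct, piV, deg, ← sum_mul, div_eq_mul_inv]

lemma weightedInner_eq_of_mulVec_piV (hd : ∀ v, 0 < deg A v) {s : V → ℝ} (hs : ∑ v, s v = 1)
    {K : Matrix V V ℝ} (hK : IsWeightedSelfAdjoint (deg A) K) {c : ℝ}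
    (hKπ : K *ᵥ piV A = c • piV A) :
    weightedInner (deg A) s (K *ᵥ (s - piV A))
      = weightedInner (deg A) (s - piV A) (K *ᵥ (s - piV A)) := by
  have hd' : ∀ v, deg A v ≠ 0 := fun v => (hd v).ne'
  obtain ⟨v, -, -⟩ := exists_ne_zero_of_sum_ne_zero (hs ▸ one_ne_zero : ∑ v, s v ≠ 0)
  have hvol : ∑ u, deg A u ≠ 0 := (sum_pos (fun u _ => hd u) ⟨v, mem_univ v⟩).ne'
  have hπ : weightedInner (deg A) (piV A) (s - piV A) = 0 := by
    have hterm (v : V) :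
        piV A v * (s - piV A) v / deg A v = (s v - piV A v) / ∑ u, deg A u := by
      simp only [piV, Pi.sub_apply]
      field_simp [hd' v]
    rw [weightedInner, sum_congr rfl fun v _ => hterm v, ← sum_div, sum_sub_distrib, hs]
    simp only [piV, ← sum_div, div_self hvol, sub_self, zero_div]
  nth_rewrite 1 [← sub_add_cancel s (piV A)]
  rw [weightedInner_add_left, hK.weightedInner_mulVec (piV A), hKπ, weightedInner_smul_left, hπ,
    mul_zero, add_zero]

lemma exp_neg_smul_nlap_mulVec_piV (hd : ∀ v, deg A v ≠ 0) (t : ℝ) :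
    NormedSpace.exp (-(t • nlap A)) *ᵥ piV A = piV A :=
  exp_mulVec_of_mulVec_eq_zero (by
    rw [neg_mulVec, smul_mulVec, nlap_mulVec_piV hd, smul_zero, neg_zero])

lemma weightedInner_heat_sub_piV (hA : A.IsSymm) (hd : ∀ v, 0 < deg A v) {s : V → ℝ}
    (hs : ∑ v, s v = 1) (t : ℝ) :
    weightedInner (deg A) s (heat A t s - piV A) = heatMoment (deg A) (nlap A) (s - piV A) 0 t := by
  have hd' : ∀ v, deg A v ≠ 0 := fun v => (hd v).ne'
  have hE := exp_neg_smul_nlap_mulVec_piV hd' t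
  have hK := (isWeightedSelfAdjoint_nlap hA).pow_mul_exp_neg_smul hd' 0 t
  rw [pow_zero, Matrix.one_mul] at hK
  rw [heatMoment, pow_zero, Matrix.one_mul, ← weightedInner_eq_of_mulVec_piV hd hs hK
    (c := 1) (by rw [hE, one_smul]), mulVec_sub, hE, heat]

lemma weightedInner_nlap_pow_heat (hA : A.IsSymm) (hd : ∀ v, 0 < deg A v) {s : V → ℝ}
    (hs : ∑ v, s v = 1) (k : ℕ) (t : ℝ) :
    weightedInner (deg A) s (nlap A ^ (k + 1) *ᵥ heat A t s)
      = heatMoment (deg A) (nlap A) (s - piV A) (k + 1) t := by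
  have hd' : ∀ v, deg A v ≠ 0 := fun v => (hd v).ne'
  have hKπ : (nlap A ^ (k + 1) * NormedSpace.exp (-(t • nlap A))) *ᵥ piV A = 0 := by
    rw [← mulVec_mulVec, exp_neg_smul_nlap_mulVec_piV hd', pow_succ, ← mulVec_mulVec,
      nlap_mulVec_piV hd', mulVec_zero]
  rw [heatMoment, ← weightedInner_eq_of_mulVec_piV hd hs
    ((isWeightedSelfAdjoint_nlap hA).pow_mul_exp_neg_smul hd' (k + 1) t) (c := 0)
    (by rw [hKπ, zero_smul]), mulVec_sub, hKπ, sub_zero, heat, mulVec_mulVec]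

end Graph

theorem log_f_convex_general {V : Type} [Fintype V] [DecidableEq V]
    (A : Matrix V V ℝ) (hsym : A.IsSymm)
    (hd : ∀ v, 0 < deg A v) (s : V → ℝ) (hs : ∑ v, s v = 1) :
    (∀ Δ : ℝ, 0 ≤ Δ →
      (∑ v, s v * ((nlap A).mulVec (heat A Δ s)) v / deg A v) ^ 2
        ≤ (∑ v, s v * (heat A Δ s v - piV A v) / deg A v)
          * (∑ v, s v * ((nlap A * nlap A).mulVec (heat A Δ s)) v / deg A v)) ∧
    (s ≠ piV A →
      (∀ Δ : ℝ, 0 ≤ Δ → 0 < ∑ v, s v * (heat A Δ s v - piV A v) / deg A v) ∧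
      ConvexOn ℝ (Set.Ici 0)
        (fun Δ => Real.log (∑ v, s v * (heat A Δ s v - piV A v) / deg A v))) := by
  have hL := isWeightedSelfAdjoint_nlap hsym
  have hf (t : ℝ) : ∑ v, s v * (heat A t s v - piV A v) / deg A v
      = heatMoment (deg A) (nlap A) (s - piV A) 0 t :=
    weightedInner_heat_sub_piV hsym hd hs t
  have h1 (t : ℝ) : ∑ v, s v * (nlap A *ᵥ heat A t s) v / deg A v
      = heatMoment (deg A) (nlap A) (s - piV A) 1 t := by
    have h := weightedInner_nlap_pow_heat hsym hd hs 0 t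
    rw [zero_add, pow_one] at h
    exact h
  have h2 (t : ℝ) : ∑ v, s v * ((nlap A * nlap A) *ᵥ heat A t s) v / deg A v
      = heatMoment (deg A) (nlap A) (s - piV A) 2 t := by
    have h := weightedInner_nlap_pow_heat hsym hd hs 1 t
    rw [one_add_one_eq_two, sq] at h
    exact h
  refine ⟨fun t _ => ?_, fun hne => ⟨fun t _ => ?_, ?_⟩⟩
  · rw [hf, h1, h2]
    exact heatMoment_one_sq_le hd hL _ t
  · rw [hf]
    exact heatMoment_zero_pos hd hL (sub_ne_zero.mpr hne) t
  · simp only [hf]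
    exact (convexOn_log_heatMoment_zero hd hL (sub_ne_zero.mpr hne)).subset (Set.subset_univ _)
      (convex_Ici 0)

/-- Lemma 4.8: Cauchy–Schwarz inequality
`f(Δ) · (sᵀ D⁻¹ 𝓛² e^{−Δ𝓛} s) ≥ (sᵀ D⁻¹ 𝓛 e^{−Δ𝓛} s)²`; consequently, if `s ≠ π`
then `f > 0` on `[0,∞)` and `log ∘ f` is convex on `[0,∞)`. -/
theorem log_f_convex {V : Type} [Fintype V] [DecidableEq V]
    (A : Matrix V V ℝ) (hsym : A.IsSymm) (hnn : ∀ u v, 0 ≤ A u v)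
    (hd : ∀ v, 0 < deg A v) (s : V → ℝ) (hs : ∑ v, s v = 1) :
    (∀ Δ : ℝ, 0 ≤ Δ →
      (∑ v, s v * ((nlap A).mulVec (heat A Δ s)) v / deg A v) ^ 2
        ≤ (∑ v, s v * (heat A Δ s v - piV A v) / deg A v)
          * (∑ v, s v * ((nlap A * nlap A).mulVec (heat A Δ s)) v / deg A v)) ∧
    (s ≠ piV A →
      (∀ Δ : ℝ, 0 ≤ Δ → 0 < ∑ v, s v * (heat A Δ s v - piV A v) / deg A v) ∧
      ConvexOn ℝ (Set.Ici 0)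
        (fun Δ => Real.log (∑ v, s v * (heat A Δ s v - piV A v) / deg A v))) :=
  log_f_convex_general A hsym hd s hs

end GraphHeat
end
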